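/- For the labeled system: if u →_{R_lab} v in the labeled ATRS, then erasing labels gives ‖u‖ →_R ‖v‖ or ‖u‖ = ‖v‖. Conversely, if u →_R v then for every i, label_{i+1}(u) →*_{R_lab} label_i(v). -/

import Mathlib

/-! # Applicative term rewriting systems (ATRSs) -/

/-- Simple types over a countable set of sorts. -/
inductive Ty where
  | base : ℕ → Ty
  | arrow : Ty → Ty → Ty

/-- Type order: sorts have order 0, `σ ⇒ τ` has order `max (order σ + 1) (order τ)`. -/
def Ty.order : Ty → ℕ
  | .base _ => 0
  | .arrow σ τ => max (σ.order + 1) τ.order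

/-- Applicative terms over a set `α` of function symbols, with variables `ℕ`. -/
inductive Tm (α : Type) where
  | sym : α → Tm α
  | var : ℕ → Tm α
  | app : Tm α → Tm α → Tm α

mutual
  /-- Strict subterm: `t` is a strict subterm of `s₁ s₂` if it is a strict
  subterm of `s₁` or a subterm of `s₂` (heads of applications are not subterms). -/
  inductive StrSubtm {α : Type} : Tm α → Tm α → Prop where
    | left {t s u : Tm α} : StrSubtm t s → StrSubtm t (Tm.app s u)
    | right {t s u : Tm α} : Subtm t u → StrSubtm t (Tm.app s u)
  /-- Subterm: `t ⊴ s` iff `t = s` or `t` is a strict subterm of `s`. -/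
  inductive Subtm {α : Type} : Tm α → Tm α → Prop where
    | refl (s : Tm α) : Subtm s s
    | strict {t s : Tm α} : StrSubtm t s → Subtm t s
end

/-- A signature: which symbols are constructors, their types, and variable types. -/
structure Sig (α : Type) where
  Cons : α → Prop
  typeOf : α → Ty
  varTy : ℕ → Ty

/-- Typing judgement for applicative terms. -/
inductive HasTy {α : Type} (S : Sig α) : Tm α → Ty → Prop where
  | sym (f : α) : HasTy S (.sym f) (S.typeOf f)
  | var (x : ℕ) : HasTy S (.var x) (S.varTy x)
  | app {s t : Tm α} {σ τ : Ty} :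
      HasTy S s (.arrow σ τ) → HasTy S t σ → HasTy S (.app s t) τ

mutual
  /-- Patterns: a variable, or a constructor fully applied (to base type) to patterns. -/
  inductive Pat {α : Type} (S : Sig α) : Tm α → Prop where
    | var (x : ℕ) : Pat S (.var x)
    | cons {s : Tm α} : PatSpine S s → (∃ i, HasTy S s (.base i)) → Pat S s
  /-- A constructor applied to a (possibly incomplete) list of patterns. -/
  inductive PatSpine {α : Type} (S : Sig α) : Tm α → Prop where
    | head {f : α} : S.Cons f → PatSpine S (.sym f)
    | app {s t : Tm α} : PatSpine S s → Pat S t → PatSpine S (.app s t)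
end

/-- Ground terms: terms without variables. -/
def Tm.ground {α : Type} : Tm α → Prop
  | .sym _ => True
  | .var _ => False
  | .app s t => s.ground ∧ t.ground

/-- Data terms: ground patterns. -/
def IsData {α : Type} (S : Sig α) (s : Tm α) : Prop := Pat S s ∧ s.ground

/-- The set of variables of a term. -/
def Tm.vars {α : Type} : Tm α → Set ℕ
  | .sym _ => ∅
  | .var x => {x}
  | .app s t => s.vars ∪ t.vars

/-- Number of occurrences of variable `x` in a term. -/
def Tm.count {α : Type} (x : ℕ) : Tm α → ℕ
  | .sym _ => 0
  | .var y => if y = x then 1 else 0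
  | .app s t => Tm.count x s + Tm.count x t

/-- Applying a substitution to a term. -/
def subst {α : Type} (γ : ℕ → Tm α) : Tm α → Tm α
  | .sym f => .sym f
  | .var x => γ x
  | .app s t => .app (subst γ s) (subst γ t)

/-- A rewrite rule. -/
structure Rule (α : Type) where
  lhs : Tm α
  rhs : Tm α

/-- Left-hand side shape of a constructor rule:
a defined symbol applied to patterns. -/
inductive LhsSpine {α : Type} (S : Sig α) : Tm α → Prop where
  | head {f : α} : ¬ S.Cons f → LhsSpine S (.sym f)
  | app {s t : Tm α} : LhsSpine S s → Pat S t → LhsSpine S (.app s t)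

/-- The head symbol of a term, if any. -/
def Tm.headSym {α : Type} : Tm α → Option α
  | .sym f => some f
  | .var _ => none
  | .app s _ => s.headSym

/-- `t` has the form `c t₁ ⋯ t_m` with `c` a constructor. -/
def ConsHead {α : Type} (S : Sig α) (t : Tm α) : Prop :=
  ∃ f, t.headSym = some f ∧ S.Cons f

/-- A rule is cons-free if every constructor-headed subterm of the right-hand side
is a data term or a (strict) subterm of the left-hand side. -/
def ConsFreeRule {α : Type} (S : Sig α) (ρ : Rule α) : Prop :=
  ∀ t, Subtm t ρ.rhs → ConsHead S t → (IsData S t ∨ StrSubtm t ρ.lhs)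

/-- A left-linear cons-free constructor rule (with well-typed sides of equal type,
and variables of the right-hand side occurring on the left). -/
def GoodRule {α : Type} (S : Sig α) (ρ : Rule α) : Prop :=
  LhsSpine S ρ.lhs ∧
  (∀ x, Tm.count x ρ.lhs ≤ 1) ∧
  ρ.rhs.vars ⊆ ρ.lhs.vars ∧
  (∃ σ, HasTy S ρ.lhs σ ∧ HasTy S ρ.rhs σ) ∧
  ConsFreeRule S ρ

/-- One-step rewriting: closure of rule instances under application contexts. -/
inductive Rew {α : Type} (R : Set (Rule α)) : Tm α → Tm α → Prop where
  | root {ρ : Rule α} {γ : ℕ → Tm α} :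
      ρ ∈ R → Rew R (subst γ ρ.lhs) (subst γ ρ.rhs)
  | appL {s s' t : Tm α} : Rew R s s' → Rew R (.app s t) (.app s' t)
  | appR {s t t' : Tm α} : Rew R t t' → Rew R (.app s t) (.app s t')

/-- `s` is `B`-safe: every constructor-headed subterm of `s` lies in `B`. -/
def BSafe {α : Type} (S : Sig α) (B : Set (Tm α)) (s : Tm α) : Prop :=
  ∀ t, Subtm t s → ConsHead S t → t ∈ B

/-- `B` is a suitable set of data terms: it consists of data terms, is closed
under subterms, and contains all data subterms of right-hand sides of rules. -/
def GoodB {α : Type} (S : Sig α) (R : Set (Rule α)) (B : Set (Tm α)) : Prop :=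
  (∀ t ∈ B, IsData S t) ∧
  (∀ t ∈ B, ∀ u, Subtm u t → u ∈ B) ∧
  (∀ ρ ∈ R, ∀ t, Subtm t ρ.rhs → IsData S t → t ∈ B)

/-- Spine of a basic term: a defined symbol applied to data terms. -/
inductive BasicSpine {α : Type} (S : Sig α) : Tm α → Prop where
  | head {f : α} : ¬ S.Cons f → BasicSpine S (.sym f)
  | app {s t : Tm α} : BasicSpine S s → IsData S t → BasicSpine S (.app s t)

/-- Basic terms: a defined symbol applied to data terms, of base type. -/
def Basic {α : Type} (S : Sig α) (s : Tm α) : Prop :=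
  BasicSpine S s ∧ ∃ i, HasTy S s (.base i)

/-- The set `B_s`: data terms occurring in `s` or in a right-hand side of a rule. -/
def Bset {α : Type} (S : Sig α) (R : Set (Rule α)) (s : Tm α) : Set (Tm α) :=
  { t | IsData S t ∧ (Subtm t s ∨ ∃ ρ ∈ R, Subtm t ρ.rhs) }
/-! # Labeled systems -/

open Classical in
/-- `labelTm S i s` replaces every defined symbol `f` of `s` by its `i`-labeled
copy `(f, i)`; constructors are unaffected (they get the fixed label `0`). -/
noncomputable def labelTm {α : Type} (S : Sig α) (i : ℕ) : Tm α → Tm (α × ℕ)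
  | .sym f => .sym (f, if S.Cons f then 0 else i)
  | .var x => .var x
  | .app s t => .app (labelTm S i s) (labelTm S i t)

/-- Erasing labels. -/
def eraseTm {α : Type} : Tm (α × ℕ) → Tm α
  | .sym p => .sym p.1
  | .var x => .var x
  | .app s t => .app (eraseTm s) (eraseTm t)

/-- The labeled signature: each labeled copy keeps the status and type of the
original symbol. -/
def SigLab {α : Type} (S : Sig α) : Sig (α × ℕ) :=
  { Cons := fun p => S.Cons p.1
    typeOf := fun p => S.typeOf p.1
    varTy := S.varTy }

/-- The labeled rules: `f_{i+1} → f_i` for every defined symbol `f`, and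
`f_{i+1} ℓ₁ ⋯ ℓ_k → label_i(r)` for every rule `f ℓ₁ ⋯ ℓ_k → r` of `R`. -/
def RLab {α : Type} (S : Sig α) (R : Set (Rule α)) : Set (Rule (α × ℕ)) :=
  { ρ' | ∃ f i, ¬ S.Cons f ∧ ρ' = ⟨.sym (f, i + 1), .sym (f, i)⟩ } ∪
  { ρ' | ∃ ρ ∈ R, ∃ i, ρ' = ⟨labelTm S (i + 1) ρ.lhs, labelTm S i ρ.rhs⟩ }

/-- A symbol applied to a list of arguments. -/
def mkApp {α : Type} (h : Tm α) (l : List (Tm α)) : Tm α := l.foldl Tm.app h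

/-- All argument types of a type are of order 0 (base types). -/
def ConsArgsBase : Ty → Prop
  | .base _ => True
  | .arrow σ τ => σ.order = 0 ∧ ConsArgsBase τ

/-- Termination of a term: no infinite reduction starts from it. -/
def TerminatingTm {α : Type} (R : Set (Rule α)) (s : Tm α) : Prop :=
  ¬ ∃ seq : ℕ → Tm α, seq 0 = s ∧ ∀ n, Rew R (seq n) (seq (n + 1))

/-- The computability predicate, by recursion on types: a base-type term is
computable iff it is terminating; `s : σ ⇒ τ` is computable iff `s t` is
computable for every computable `t : σ`. -/
def Comp {α : Type} (S : Sig α) (R : Set (Rule α)) : Ty → Tm α → Prop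
  | .base _, s => TerminatingTm R s
  | .arrow σ τ, s => ∀ t, HasTy S t σ → Comp S R σ t → Comp S R τ (.app s t)

/-- Existence of a semi-outermost reduction from `s` to `t`. -/
inductive SemiOut {α : Type} (R : Set (Rule α)) : Tm α → Tm α → Prop where
  | refl (s : Tm α) : SemiOut R s s
  | step {f : α} {ss ls : List (Tm α)} {ρ : Rule α} {γ : ℕ → Tm α} {t : Tm α}
      (hρ : ρ ∈ R) (hl : ρ.lhs = mkApp (Tm.sym f) ls)
      (hle : ls.length ≤ ss.length)
      (hargs : ∀ j (hj : j < ls.length),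
        SemiOut R (ss[j]'(lt_of_lt_of_le hj hle)) (subst γ (ls[j]'hj)))
      (hvar : ∀ j (hj : j < ls.length), (∃ x, ls[j]'hj = Tm.var x) →
        ss[j]'(lt_of_lt_of_le hj hle) = subst γ (ls[j]'hj))
      (hrest : SemiOut R (mkApp (subst γ ρ.rhs) (ss.drop ls.length)) t) :
      SemiOut R (mkApp (Tm.sym f) ss) t

/-! Erasure and labelling commute with substitution, so a labeled rule instance erases to an
instance of the original rule, while `f_{i+1} → f_i` erases to an equality. Conversely, a step
`u → v` at a redex is simulated at label `i + 1` by the labeled copy of the rule, after which the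
parts of the term not touched by the rule are lowered from label `i + 1` to label `i` by the rules
`f_{i+1} → f_i`. -/

theorem eraseTm_subst {α : Type} (γ : ℕ → Tm (α × ℕ)) (t : Tm (α × ℕ)) :
    eraseTm (subst γ t) = subst (fun x => eraseTm (γ x)) (eraseTm t) := by
  induction t with
  | sym f => rfl
  | var x => rfl
  | app s t ihs iht => simp only [subst, eraseTm, ihs, iht]

theorem eraseTm_labelTm {α : Type} (S : Sig α) (i : ℕ) (t : Tm α) :
    eraseTm (labelTm S i t) = t := by
  induction t with
  | sym f => rfl
  | var x => rfl
  | app s t ihs iht => simp only [labelTm, eraseTm, ihs, iht]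

theorem labelTm_subst {α : Type} (S : Sig α) (i : ℕ) (γ : ℕ → Tm α) (t : Tm α) :
    labelTm S i (subst γ t) = subst (fun x => labelTm S i (γ x)) (labelTm S i t) := by
  induction t with
  | sym f => rfl
  | var x => rfl
  | app s t ihs iht => simp only [labelTm, subst, ihs, iht]

namespace Rew

variable {α : Type} {R : Set (Rule α)}

theorem reflTransGen_app {s s' t t' : Tm α} (hs : Relation.ReflTransGen (Rew R) s s')
    (ht : Relation.ReflTransGen (Rew R) t t') :
    Relation.ReflTransGen (Rew R) (.app s t) (.app s' t') :=
  (hs.lift (Tm.app · t) fun _ _ => appL).trans (ht.lift (Tm.app s') fun _ _ => appR)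

theorem reflTransGen_subst {γ δ : ℕ → Tm α} (h : ∀ x, Relation.ReflTransGen (Rew R) (γ x) (δ x))
    (t : Tm α) : Relation.ReflTransGen (Rew R) (subst γ t) (subst δ t) := by
  induction t with
  | sym f => exact .refl
  | var x => exact h x
  | app s t ihs iht => exact reflTransGen_app ihs iht

theorem eraseTm_of_rLab {S : Sig α} {u v : Tm (α × ℕ)} (h : Rew (RLab S R) u v) :
    Rew R (eraseTm u) (eraseTm v) ∨ eraseTm u = eraseTm v := by
  induction h with
  | root hρ =>
    rcases hρ with ⟨f, i, -, rfl⟩ | ⟨ρ, hρ, i, rfl⟩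
    · exact .inr rfl
    · rw [eraseTm_subst, eraseTm_subst, eraseTm_labelTm, eraseTm_labelTm]
      exact .inl (root hρ)
  | appL _ ih => exact ih.imp appL (congrArg (Tm.app · _))
  | appR _ ih => exact ih.imp appR (congrArg (Tm.app _ ·))

theorem labelTm_succ_reflTransGen (S : Sig α) (R : Set (Rule α)) (i : ℕ) (t : Tm α) :
    Relation.ReflTransGen (Rew (RLab S R)) (labelTm S (i + 1) t) (labelTm S i t) := by
  induction t with
  | sym f =>
    by_cases hf : S.Cons f
    · simp only [labelTm, if_pos hf]
      exact .refl
    · simp only [labelTm, if_neg hf]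
      exact .single (root (ρ := ⟨.sym (f, i + 1), .sym (f, i)⟩) (γ := Tm.var)
        (.inl ⟨f, i, hf, rfl⟩))
  | var x => exact .refl
  | app s t ihs iht => exact reflTransGen_app ihs iht

theorem labelTm_reflTransGen_rLab {S : Sig α} {u v : Tm α} (h : Rew R u v) (i : ℕ) :
    Relation.ReflTransGen (Rew (RLab S R)) (labelTm S (i + 1) u) (labelTm S i v) := by
  induction h generalizing i with
  | @root ρ γ hρ =>
    rw [labelTm_subst, labelTm_subst]
    have labeled_step := root (R := RLab S R) (γ := fun x => labelTm S (i + 1) (γ x))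
      (ρ := ⟨labelTm S (i + 1) ρ.lhs, labelTm S i ρ.rhs⟩) (.inr ⟨ρ, hρ, i, rfl⟩)
    exact .head labeled_step
      (reflTransGen_subst (fun x => labelTm_succ_reflTransGen S R i (γ x)) _)
  | appL _ ih => exact reflTransGen_app (ih i) (labelTm_succ_reflTransGen S R i _)
  | appR _ ih => exact reflTransGen_app (labelTm_succ_reflTransGen S R i _) (ih i)

end Rew

/-- Labeled versus unlabeled rewriting: a labeled step erases to an unlabeled
step or to equality; conversely an unlabeled step `u → v` lifts, for every `i`,
to a labeled reduction `label_{i+1}(u) →* label_i(v)`. -/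
theorem labeled_step_correspondence {α : Type} (S : Sig α) (R : Set (Rule α))
    (hR : ∀ ρ ∈ R, GoodRule S ρ) :
    (∀ u v : Tm (α × ℕ), Rew (RLab S R) u v →
      Rew R (eraseTm u) (eraseTm v) ∨ eraseTm u = eraseTm v) ∧
    (∀ u v : Tm α, Rew R u v → ∀ i,
      Relation.ReflTransGen (Rew (RLab S R)) (labelTm S (i + 1) u) (labelTm S i v)) := by
  exact ⟨fun _ _ => Rew.eraseTm_of_rLab, fun _ _ => Rew.labelTm_reflTransGen_rLab⟩
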